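/- arXiv:2303.15529 — 4 statements merged into one kernel-verified Lean document; each statement's English description precedes it below -/
import Mathlib

section
/- If a graph G is a subgraph of an edge layer of Q_n and each edge of G is assigned as its color the direction of that edge (i.e., the unique coordinate in which its two endpoints differ), then this edge-coloring of G is very nice. -/
open SimpleGraph

/-- The hypercube graph `Q_n`: vertices are subsets of `[n]`, adjacent iff one contains the
other and their sizes differ by one. -/
def hypercube (n : ℕ) : SimpleGraph (Finset (Fin n)) where
  Adj A B := (A ⊆ B ∧ B.card = A.card + 1) ∨ (B ⊆ A ∧ A.card = B.card + 1)
  symm := ⟨fun A B h => h.symm⟩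
  loopless := ⟨by
    intro A h
    rcases h with ⟨-, h⟩ | ⟨-, h⟩ <;> omega⟩

/-- The `k`-th edge layer of `Q_n`: the subgraph of the hypercube induced by the vertices of
sizes `k` and `k-1`. -/
def edgeLayer (n k : ℕ) : SimpleGraph (Finset (Fin n)) where
  Adj A B := (hypercube n).Adj A B ∧ (A.card = k ∨ A.card + 1 = k) ∧
    (B.card = k ∨ B.card + 1 = k)
  symm := ⟨fun A B h => ⟨(hypercube n).symm.symm _ _ h.1, h.2.2, h.2.1⟩⟩
  loopless := ⟨fun A h => (hypercube n).loopless.irrefl A h.1⟩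

/-- An edge-coloring is nice if on every cycle each color appears an even number of times and
on every path with at least one edge some color appears an odd number of times. -/
def IsNiceColoring {V C : Type*} [DecidableEq C] (G : SimpleGraph V) (c : Sym2 V → C) : Prop :=
  (∀ (u : V) (w : G.Walk u u), w.IsCycle → ∀ col : C, Even ((w.edges.map c).count col)) ∧
  (∀ (u v : V) (p : G.Walk u v), p.IsPath → 0 < p.length →
    ∃ col : C, Odd ((p.edges.map c).count col))

/-- An edge-coloring is very nice if it is nice and for any two distinct edges of the same
color, every path between them containing no edge of that color has even length. -/
def IsVeryNiceColoring {V C : Type*} [DecidableEq C] (G : SimpleGraph V) (c : Sym2 V → C) :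
    Prop :=
  IsNiceColoring G c ∧
  ∀ e₁ e₂ : Sym2 V, e₁ ∈ G.edgeSet → e₂ ∈ G.edgeSet → e₁ ≠ e₂ → c e₁ = c e₂ →
    ∀ (x y : V) (p : G.Walk x y), p.IsPath → x ∈ e₁ → y ∈ e₂ →
      (∀ e ∈ p.edges, c e ≠ c e₁) → Even p.length

/-!
A walk flips, at each step, exactly the direction of the edge it crosses, so a colour `d` occurs an
odd number of times on a walk from `x` to `y` iff `d ∈ x ∆ y`; this is niceness. In an edge layer
the direction of an edge lies in its upper endpoint and not in its lower one, so a walk avoiding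
colour `d` that joins endpoints of two `d`-edges joins two vertices of the same level, and walks in
`Q_n` between sets of equal size have even length.
-/

open Finset
open scoped symmDiff

section Hypercube

variable {n k : ℕ} {A B x y : Finset (Fin n)} {d : Fin n}

theorem edgeLayer_le_hypercube : edgeLayer n k ≤ hypercube n := fun _ _ h => h.1

theorem card_symmDiff_of_hypercube_adj (h : (hypercube n).Adj A B) : #(A ∆ B) = 1 := by
  rcases h with ⟨hAB, hcard⟩ | ⟨hBA, hcard⟩
  · rw [symmDiff_of_le hAB, card_sdiff_of_subset hAB]
    omega
  · rw [symmDiff_of_ge hBA, card_sdiff_of_subset hBA]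
    omega

theorem symmDiff_eq_singleton_of_hypercube_adj (h : (hypercube n).Adj A B) (hd : d ∈ A ∆ B) :
    A ∆ B = {d} := by
  obtain ⟨a, ha⟩ := card_eq_one.mp (card_symmDiff_of_hypercube_adj h)
  rw [ha] at hd ⊢
  rw [mem_singleton.mp hd]

theorem mem_iff_card_eq_of_edgeLayer_adj (h : (edgeLayer n k).Adj A B) (hd : d ∈ A ∆ B) :
    d ∈ A ↔ #A = k := by
  obtain ⟨⟨hAB, hcard⟩ | ⟨hBA, hcard⟩, hA, hB⟩ := h <;> rw [mem_symmDiff] at hd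
  · have hdA : d ∉ A := fun hdA => hd.elim (·.2 (hAB hdA)) (·.2 hdA)
    simp only [hdA, false_iff]
    omega
  · have hdA : d ∈ A := hd.elim (·.1) fun hdB => absurd (hBA hdB.1) hdB.2
    simp only [hdA, true_iff]
    omega

theorem card_eq_card_of_edgeLayer_adj (hx : (edgeLayer n k).Adj x A)
    (hy : (edgeLayer n k).Adj y B) (hdx : d ∈ x ∆ A) (hdy : d ∈ y ∆ B) (hd : d ∈ x ↔ d ∈ y) :
    #x = #y := by
  have hxy : #x = k ↔ #y = k :=
    (mem_iff_card_eq_of_edgeLayer_adj hx hdx).symm.trans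
      (hd.trans (mem_iff_card_eq_of_edgeLayer_adj hy hdy))
  have := hx.2.1
  have := hy.2.1
  omega

end Hypercube

namespace SimpleGraph.Walk

theorem odd_count_map_edges_iff_mem_symmDiff {α : Type*} [DecidableEq α]
    {G : SimpleGraph (Finset α)} {c : Sym2 (Finset α) → α}
    (hc : ∀ A B, G.Adj A B → A ∆ B = {c s(A, B)}) {x y : Finset α} (w : G.Walk x y) (d : α) :
    Odd ((w.edges.map c).count d) ↔ d ∈ x ∆ y := by
  induction w with
  | nil => simp
  | @cons x z y h p ih =>
    have hxy : x ∆ y = x ∆ z ∆ (z ∆ y) := by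
      rw [symmDiff_assoc, symmDiff_symmDiff_cancel_left]
    rw [edges_cons, List.map_cons, List.count_cons, hxy, mem_symmDiff, hc x z h, mem_singleton,
      ← ih]
    by_cases hd : c s(x, z) = d
    · simp [hd, Nat.odd_add_one]
    · simp [hd, Ne.symm hd]

theorem even_length_add_card_add_card {n : ℕ} {G : SimpleGraph (Finset (Fin n))}
    (hG : G ≤ hypercube n) {x y : Finset (Fin n)} (w : G.Walk x y) :
    Even (w.length + #x + #y) := by
  induction w with
  | nil => simp
  | cons h p ih =>
    rw [Nat.even_iff] at ih ⊢
    rw [length_cons]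
    rcases hG h with ⟨-, hcard⟩ | ⟨-, hcard⟩ <;> omega

end SimpleGraph.Walk

/-- If `G` is a subgraph of an edge layer of `Q_n` and each edge is colored by its direction
(the unique coordinate in which its endpoints differ), then the coloring is very nice. -/
theorem direction_coloring_very_nice (n k : ℕ) (G : SimpleGraph (Finset (Fin n)))
    (hG : G ≤ edgeLayer n k) (c : Sym2 (Finset (Fin n)) → Fin n)
    (hc : ∀ A B : Finset (Fin n), G.Adj A B → c s(A, B) ∈ symmDiff A B) :
    IsVeryNiceColoring G c := by
  have hG' : G ≤ hypercube n := hG.trans edgeLayer_le_hypercube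
  have hodd {x y} (w : G.Walk x y) (d) := w.odd_count_map_edges_iff_mem_symmDiff
    (fun A B h => symmDiff_eq_singleton_of_hypercube_adj (hG' h) (hc A B h)) d
  refine ⟨⟨fun u w _ d => ?_, fun u v p hp hlen => ?_⟩, ?_⟩
  · simpa using (hodd w d).not
  · have huv : u ≠ v := fun huv => Walk.not_nil_iff_lt_length.mpr hlen (hp.nil_iff_eq.mpr huv)
    obtain ⟨d, hd⟩ := symmDiff_nonempty.mpr huv
    exact ⟨d, (hodd p d).mpr hd⟩
  · intro e₁ e₂ he₁ he₂ _ hcol x y p _ hx hy havoid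
    obtain ⟨A, rfl⟩ := Sym2.mem_iff_exists.mp hx
    obtain ⟨B, rfl⟩ := Sym2.mem_iff_exists.mp hy
    have hd : c s(x, A) ∈ x ↔ c s(x, A) ∈ y := by
      have : c s(x, A) ∉ x ∆ y := by
        rw [← hodd p, List.count_eq_zero.mpr (by simpa using havoid)]
        exact Nat.not_odd_zero
      rw [mem_symmDiff] at this
      tauto
    have hxy := card_eq_card_of_edgeLayer_adj (hG he₁) (hG he₂) (hc _ _ he₁)
      (hcol ▸ hc _ _ he₂) hd
    have hlen := p.even_length_add_card_add_card hG'
    rw [hxy, add_assoc] at hlen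
    exact (Nat.even_add.mp hlen).mpr (Even.add_self _)
end

section
/- In any very nice edge-coloring of a connected graph G, every color class is an edge cut of G; that is, for each color used, removing all edges of that color disconnects G. -/
open SimpleGraph

/-- In a very nice edge-coloring of a connected graph, every color class is an edge cut:
removing all the edges of any used color disconnects the graph. -/
theorem colorClass_is_cut {V C : Type} [DecidableEq C] (G : SimpleGraph V)
    (hconn : G.Connected) (c : Sym2 V → C) (hc : IsVeryNiceColoring G c) (col : C)
    (hused : ∃ e ∈ G.edgeSet, c e = col) :
    ¬ (G.deleteEdges {e | c e = col}).Connected := by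
  classical
  intro hconn'
  obtain ⟨e, he, hce⟩ := hused
  induction e using Sym2.ind with
  | _ u v =>
  have hadj : G.Adj u v := he
  -- get a path in the deleted graph from v to u
  obtain ⟨q⟩ := hconn' v u
  let p := q.toPath
  have hpedges : ∀ f ∈ p.val.edges, f ∈ G.edgeSet ∧ c f ≠ col := by
    intro f hf
    have := p.val.edges_subset_edgeSet hf
    rw [SimpleGraph.edgeSet_deleteEdges] at this
    exact ⟨this.1, this.2⟩
  let p' : G.Walk v u := p.val.transfer G (fun f hf => (hpedges f hf).1)
  have hpe : p'.edges = p.val.edges := SimpleGraph.Walk.edges_transfer _ _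
  have hp'path : p'.IsPath := p.prop.transfer _
  have hne : s(u, v) ∉ p'.edges := by
    rw [hpe]
    intro hmem
    exact (hpedges _ hmem).2 hce
  have hcyc : (SimpleGraph.Walk.cons hadj p').IsCycle :=
    SimpleGraph.Path.cons_isCycle ⟨p', hp'path⟩ hadj hne
  have heven := hc.1.1 u (SimpleGraph.Walk.cons hadj p') hcyc col
  have hcount : ((SimpleGraph.Walk.cons hadj p').edges.map c).count col = 1 := by
    rw [SimpleGraph.Walk.edges_cons, List.map_cons, List.count_cons]
    have : (p'.edges.map c).count col = 0 := by
      rw [List.count_eq_zero]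
      intro hmem
      rw [List.mem_map] at hmem
      obtain ⟨f, hf, hcf⟩ := hmem
      rw [hpe] at hf
      exact (hpedges f hf).2 hcf
    simp [this, hce]
  rw [hcount] at heven
  exact (Nat.not_even_iff_odd.mpr odd_one) heven
end

section
/- If H is a connected cubical graph that is not layered, then the subgraph of Q_n consisting of the union of all even edge layers of Q_n contains no subgraph isomorphic to H; consequently ex(Q_n, H) ≥ n·2^{n-2} for every n, so H has positive Turán density in the hypercube. -/
open SimpleGraph

/-- `G` contains a copy of `H`, i.e. `H` is isomorphic to a subgraph of `G`. -/
def ContainsCopy {α β : Type*} (G : SimpleGraph α) (H : SimpleGraph β) : Prop :=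
  ∃ f : β → α, Function.Injective f ∧ ∀ u v, H.Adj u v → G.Adj (f u) (f v)

/-- A graph is cubical if it is isomorphic to a subgraph of a hypercube. -/
def IsCubical {V : Type*} (G : SimpleGraph V) : Prop :=
  ∃ n : ℕ, ContainsCopy (hypercube n) G

/-- A graph is layered if it is isomorphic to a subgraph of an edge layer of a hypercube. -/
def IsLayered {V : Type*} (G : SimpleGraph V) : Prop :=
  ∃ (n k : ℕ) (f : V → Finset (Fin n)), Function.Injective f ∧
    (∀ v, (f v).card = k ∨ (f v).card + 1 = k) ∧
    ∀ u v, G.Adj u v → (hypercube n).Adj (f u) (f v)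

/-- The number of edges of a graph. -/
noncomputable def numEdges {V : Type*} (G : SimpleGraph V) : ℕ := Nat.card G.edgeSet

/-- The union of all even edge layers of `Q_n`: an edge of `Q_n` between layers `k-1` and `k`
is kept exactly when `k` is even. -/
def evenLayers (n : ℕ) : SimpleGraph (Finset (Fin n)) where
  Adj A B := (hypercube n).Adj A B ∧ Even (max A.card B.card)
  symm := ⟨fun A B h => ⟨(hypercube n).symm.symm _ _ h.1, by rw [max_comm]; exact h.2⟩⟩
  loopless := ⟨fun A h => (hypercube n).loopless.irrefl A h.1⟩

/-!
Along an edge of `Q_n` in a layer of parity `p`, both endpoints determine that layer: a vertex of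
size `c` meets layers `c` and `c + 1`, exactly one of which has parity `p`. So for a copy of a
connected graph in the union of the layers of parity `p` this layer index is constant along walks,
and the copy lies in a single edge layer. The union of the odd layers has `n * 2 ^ (n - 2)` edges:
one edge `A ⊂ insert i A` for every `i` and every even-size `A ⊆ [n] \ {i}`, and exactly half of
the subsets of a nonempty set have even size.
-/

open Finset

theorem SimpleGraph.Reachable.eq_of_forall_adj_eq {V α : Type*} {G : SimpleGraph V} {f : V → α}
    (hf : ∀ u v, G.Adj u v → f u = f v) {u v : V} (h : G.Reachable u v) : f u = f v := by
  obtain ⟨p⟩ := h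
  induction p with
  | nil => rfl
  | cons huw _ ih => exact (hf _ _ huw).trans ih

theorem card_powerset_filter_even {α : Type*} [DecidableEq α] (s : Finset α) :
    #{A ∈ s.powerset | Even #A} = 2 ^ (#s - 1) := by
  obtain rfl | ⟨a, ha⟩ := s.eq_empty_or_nonempty
  · rfl
  rw [← card_erase_of_mem ha, ← card_powerset]
  refine card_nbij' (·.erase a) (fun B => if Even #B then B else insert a B) ?_ ?_ ?_ ?_
  · intro A hA
    rw [mem_coe, mem_filter, mem_powerset] at hA
    exact mem_coe.mpr (mem_powerset.mpr (erase_subset_erase a hA.1))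
  · intro B hB
    rw [mem_coe, mem_powerset, subset_erase] at hB
    rw [mem_coe, mem_filter, mem_powerset]
    dsimp only
    split_ifs with hev
    · exact ⟨hB.1, hev⟩
    · refine ⟨insert_subset ha hB.1, ?_⟩
      rwa [card_insert_of_notMem hB.2, Nat.even_add_one]
  · intro A hA
    rw [mem_coe, mem_filter, mem_powerset] at hA
    by_cases haA : a ∈ A
    · have : ¬ Even #(A.erase a) := by
        rw [← Nat.even_add_one, card_erase_add_one haA]; exact hA.2
      simp only [this, if_false, insert_erase haA]
    · simp only [erase_eq_of_notMem haA, hA.2, if_true]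
  · intro B hB
    rw [mem_coe, mem_powerset, subset_erase] at hB
    dsimp only
    split_ifs
    · exact erase_eq_of_notMem hB.2
    · exact erase_insert hB.2

theorem hypercube_adj_insert {n : ℕ} {i : Fin n} {A : Finset (Fin n)} (hi : i ∉ A) :
    (hypercube n).Adj A (insert i A) :=
  Or.inl ⟨subset_insert i A, card_insert_of_notMem hi⟩

theorem injOn_sym2_insert {α : Type*} [DecidableEq α] :
    Set.InjOn (fun x : (_ : α) × Finset α => s(x.2, insert x.1 x.2)) {x | x.1 ∉ x.2} := by
  rintro ⟨i, A⟩ hiA ⟨j, B⟩ hjB h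
  simp only [Set.mem_ofPred_eq, Sym2.eq_iff] at hiA hjB h
  rcases h with ⟨rfl, hAB⟩ | ⟨rfl, hBA⟩
  · obtain rfl : i = j := (mem_insert.mp (hAB ▸ mem_insert_self i A)).resolve_right hiA
    rfl
  · exact absurd (hBA ▸ mem_insert_of_mem (mem_insert_self j B)) hjB

def parityLayers (n p : ℕ) : SimpleGraph (Finset (Fin n)) where
  Adj A B := (hypercube n).Adj A B ∧ max A.card B.card % 2 = p
  symm := ⟨fun A B h => ⟨h.1.symm, by rw [max_comm]; exact h.2⟩⟩
  loopless := ⟨fun A h => (hypercube n).loopless.irrefl A h.1⟩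

theorem parityLayers_le_hypercube (n p : ℕ) : parityLayers n p ≤ hypercube n :=
  fun _ _ h => h.1

theorem evenLayers_eq_parityLayers_zero (n : ℕ) : evenLayers n = parityLayers n 0 := by
  ext A B
  exact and_congr_right' Nat.even_iff

-- `c + (c + p) % 2` is the layer of parity `p` among the two layers `c, c + 1` met at size `c`
theorem parityLayers_adj_layer_eq {n p : ℕ} {A B : Finset (Fin n)}
    (h : (parityLayers n p).Adj A B) : #A + (#A + p) % 2 = #B + (#B + p) % 2 := by
  obtain ⟨⟨-, hc⟩ | ⟨-, hc⟩, hp⟩ := h <;> omega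

theorem isLayered_of_containsCopy_parityLayers {β : Type*} {H : SimpleGraph β}
    (hconn : H.Connected) {n p : ℕ} (h : ContainsCopy (parityLayers n p) H) : IsLayered H := by
  obtain ⟨f, hinj, hadj⟩ := h
  obtain ⟨v₀⟩ := hconn.nonempty
  let layer (v : β) : ℕ := #(f v) + (#(f v) + p) % 2
  have hlayer (v : β) : layer v = layer v₀ :=
    (hconn v v₀).eq_of_forall_adj_eq fun u w huw => parityLayers_adj_layer_eq (hadj u w huw)
  refine ⟨n, layer v₀, f, hinj, fun v => ?_, fun u v huv => (hadj u v huv).1⟩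
  have := hlayer v
  simp only [layer] at this ⊢
  omega

theorem le_numEdges_parityLayers_one (n : ℕ) :
    n * 2 ^ (n - 2) ≤ numEdges (parityLayers n 1) := by
  classical
  let S := (univ : Finset (Fin n)).sigma fun i => {A ∈ (univ.erase i).powerset | Even #A}
  have hS : #S = n * 2 ^ (n - 2) := by
    simp [S, card_sigma, card_powerset_filter_even, card_erase_of_mem, Nat.sub_sub]
  rw [numEdges, Nat.card_eq_fintype_card, ← edgeFinset_card, ← hS]
  refine card_le_card_of_injOn _ (fun x hx => ?_) (injOn_sym2_insert.mono fun x hx => ?_)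
  all_goals
    simp only [S, coe_sigma, Set.mem_sigma_iff, coe_univ, Set.mem_univ, coe_filter, mem_powerset,
      subset_erase, Set.mem_ofPred_eq, true_and] at hx
  · rw [mem_coe, mem_edgeFinset, mem_edgeSet]
    refine ⟨hypercube_adj_insert hx.1.2, ?_⟩
    rw [card_insert_of_notMem hx.1.2, max_eq_right (Nat.le_succ _)]
    exact Nat.succ_mod_two_eq_one_iff.mpr (Nat.even_iff.mp hx.2)
  · exact hx.1.2

-- The odd layers rather than the even ones: for `n = 1` the bound `n * 2 ^ (n - 2)` is `1`,
-- and the only edge of `Q_1` lies in layer `1`.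
theorem not_layered_positive_density_general {β : Type} (H : SimpleGraph β) (hconn : H.Connected)
    (hlay : ¬ IsLayered H) (n : ℕ) :
    ¬ ContainsCopy (evenLayers n) H ∧
    ∃ G : SimpleGraph (Finset (Fin n)), G ≤ hypercube n ∧ ¬ ContainsCopy G H ∧
      n * 2 ^ (n - 2) ≤ numEdges G := by
  refine ⟨fun h => hlay ?_, parityLayers n 1, parityLayers_le_hypercube n 1,
    fun h => hlay (isLayered_of_containsCopy_parityLayers hconn h),
    le_numEdges_parityLayers_one n⟩
  rw [evenLayers_eq_parityLayers_zero] at h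
  exact isLayered_of_containsCopy_parityLayers hconn h

/-- If `H` is a connected cubical graph that is not layered, then the union of the even edge
layers of `Q_n` contains no copy of `H`; consequently `ex(Q_n, H) ≥ n·2^(n-2)`, so `H` has
positive Turán density in the hypercube. -/
theorem not_layered_positive_density {β : Type} (H : SimpleGraph β) (hconn : H.Connected)
    (hcub : IsCubical H) (hlay : ¬ IsLayered H) (n : ℕ) :
    ¬ ContainsCopy (evenLayers n) H ∧
    ∃ G : SimpleGraph (Finset (Fin n)), G ≤ hypercube n ∧ ¬ ContainsCopy G H ∧
      n * 2 ^ (n - 2) ≤ numEdges G :=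
  not_layered_positive_density_general H hconn hlay n
end

section
/- For every integer k ≥ 0 and every positive integer t, the odd subdivision T_{2k+1}(K_t) of the complete graph K_t is layered. -/
/-!
Take the ground set `[t] × [k + 1]`, split into `t` blocks of size `k + 1`, and send the branch
vertex `i` to its block. The path of length `2k + 2` replacing the edge `ij` walks from block `i`
to block `j` by alternately adding a point `(j, r)` and removing the point `(i, r)`,
`r = 0, …, k`; so consecutive sets are hypercube neighbours and every set has size `k + 1` or
`k + 2`. Every set strictly inside such a walk meets exactly the blocks `i` and `j`, and distinct
positions of a walk give distinct sets, so the map is injective.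
-/

open SimpleGraph

/-- The `m`-subdivision `T_m(K_t)` of the complete graph `K_t`: each edge `{i,j}` (`i < j`) is
replaced by a path `i, ((i,j),0), …, ((i,j),m-1), j` with `m` new internal vertices. -/
def subdividedComplete (t m : ℕ) :
    SimpleGraph (Fin t ⊕ ({p : Fin t × Fin t // p.1 < p.2} × Fin m)) :=
  SimpleGraph.fromRel (fun x y =>
    match x, y with
    | Sum.inl u, Sum.inr (e, l) => (u = e.1.1 ∧ l.val = 0) ∨ (u = e.1.2 ∧ l.val = m - 1)
    | Sum.inr (e, l), Sum.inr (e', l') => e = e' ∧ l.val + 1 = l'.val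
    | _, _ => False)

open Finset

theorem Finset.covBy_iff_subset_card_eq {α : Type*} {A B : Finset α} :
    A ⋖ B ↔ A ⊆ B ∧ B.card = A.card + 1 := by
  classical
  rw [covBy_iff_card_sdiff_eq_one]
  refine and_congr_right fun hAB => ?_
  have := card_le_card hAB
  rw [card_sdiff_of_subset hAB]
  omega

theorem hypercube_eq_hasse (n : ℕ) : hypercube n = hasse (Finset (Fin n)) := by
  ext A B
  simp only [hypercube, hasse_adj, covBy_iff_subset_card_eq]

theorem Finset.map_covBy_map {α β : Type*} (e : α ↪ β) {A B : Finset α} (h : A ⋖ B) :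
    A.map e ⋖ B.map e := by
  classical
  obtain ⟨a, ha, rfl⟩ := covBy_iff_exists_insert.1 h
  rw [map_insert]
  exact covBy_insert (by simpa using ha)

theorem isLayered_of_hom {V α : Type*} [Fintype α] {G : SimpleGraph V}
    (f : G →g hasse (Finset α)) (hf : Function.Injective f) (k : ℕ)
    (hcard : ∀ v, (f v).card = k ∨ (f v).card + 1 = k) : IsLayered G := by
  let e := (Fintype.equivFin α).toEmbedding
  refine ⟨Fintype.card α, k, fun v => (f v).map e, (Finset.map_injective e).comp hf,
    fun v => by simpa using hcard v, fun u v huv => ?_⟩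
  rw [hypercube_eq_hasse, hasse_adj]
  exact (hasse_adj.1 (f.map_adj huv)).imp (map_covBy_map e) (map_covBy_map e)

namespace SubdividedComplete

variable {t : ℕ} (k : ℕ)

def block (i : Fin t) : Finset (Fin t × Fin (k + 1)) := {i} ×ˢ univ

/-- Position `p` of the walk from `block k i` to `block k j`: the point `(j, r)` enters at step
`2 * r + 1` and the point `(i, r)` leaves at step `2 * r + 2`. -/
def pathSet (i j : Fin t) (p : ℕ) : Finset (Fin t × Fin (k + 1)) :=
  {x | x.1 = j ∧ 2 * x.2.val < p ∨ x.1 = i ∧ p < 2 * x.2.val + 2}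

variable {k}

@[simp]
theorem mem_block {i : Fin t} {x : Fin t × Fin (k + 1)} : x ∈ block k i ↔ x.1 = i := by
  simp only [block, mem_product, mem_singleton, mem_univ, and_true]

@[simp]
theorem mem_pathSet {i j : Fin t} {p : ℕ} {x : Fin t × Fin (k + 1)} :
    x ∈ pathSet k i j p ↔ x.1 = j ∧ 2 * x.2.val < p ∨ x.1 = i ∧ p < 2 * x.2.val + 2 := by
  simp [pathSet]

theorem card_block (i : Fin t) : (block k i).card = k + 1 := by
  simp [block]

theorem pathSet_zero (i j : Fin t) : pathSet k i j 0 = block k i := by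
  ext x; simp

theorem pathSet_two_mul_add_two (i j : Fin t) : pathSet k i j (2 * k + 2) = block k j := by
  ext x
  have := x.2.isLt
  simp only [mem_pathSet, mem_block, Fin.ext_iff]
  omega

variable {i j : Fin t}

theorem pathSet_two_mul_covBy (hij : i ≠ j) {r : ℕ} (hr : r ≤ k) :
    pathSet k i j (2 * r) ⋖ pathSet k i j (2 * r + 1) := by
  have : insert (j, ⟨r, by omega⟩) (pathSet k i j (2 * r)) = pathSet k i j (2 * r + 1) := by
    ext ⟨a, b⟩
    simp only [mem_insert, mem_pathSet, Prod.ext_iff, Fin.ext_iff]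
    omega
  rw [← this]
  exact covBy_insert (by simp [hij.symm])

theorem pathSet_two_mul_add_two_covBy (hij : i ≠ j) {r : ℕ} (hr : r ≤ k) :
    pathSet k i j (2 * r + 2) ⋖ pathSet k i j (2 * r + 1) := by
  have : insert (i, ⟨r, by omega⟩) (pathSet k i j (2 * r + 2)) = pathSet k i j (2 * r + 1) := by
    ext ⟨a, b⟩
    simp only [mem_insert, mem_pathSet, Prod.ext_iff, Fin.ext_iff]
    omega
  rw [← this]
  exact covBy_insert (by simp [hij])

theorem hasse_adj_pathSet_succ (hij : i ≠ j) {p : ℕ} (hp : p < 2 * k + 2) :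
    (hasse _).Adj (pathSet k i j p) (pathSet k i j (p + 1)) := by
  rw [hasse_adj]
  obtain ⟨r, rfl | rfl⟩ := Nat.even_or_odd' p
  · exact Or.inl (pathSet_two_mul_covBy hij (by omega : r ≤ k))
  · exact Or.inr (pathSet_two_mul_add_two_covBy hij (by omega : r ≤ k))

theorem card_pathSet (hij : i ≠ j) {p : ℕ} (hp : p ≤ 2 * k + 2) :
    (pathSet k i j p).card = k + 1 + p % 2 := by
  induction p with
  | zero => simp [pathSet_zero, card_block]
  | succ p ih =>
    have ih := ih (by omega)
    obtain ⟨r, rfl | rfl⟩ := Nat.even_or_odd' p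
    · have := Nat.covBy_iff_add_one_eq.1
        (pathSet_two_mul_covBy hij (by omega : r ≤ k)).card_finset
      omega
    · have := Nat.covBy_iff_add_one_eq.1
        (pathSet_two_mul_add_two_covBy hij (by omega : r ≤ k)).card_finset
      rw [show 2 * r + 1 + 1 = 2 * r + 2 from rfl]
      omega

theorem pathSet_ne_of_lt (hij : i ≠ j) {p q : ℕ} (hpq : p < q) (hq : q ≤ 2 * k + 2) :
    pathSet k i j p ≠ pathSet k i j q := by
  intro h
  obtain ⟨r, rfl | rfl⟩ := Nat.even_or_odd' p
  · have hr : ((j, ⟨r, by omega⟩) : Fin t × Fin (k + 1)) ∈ pathSet k i j q := by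
      simp only [mem_pathSet, true_and]
      omega
    rw [← h] at hr
    simp [hij.symm] at hr
  · have hr : ((i, ⟨r, by omega⟩) : Fin t × Fin (k + 1)) ∈ pathSet k i j (2 * r + 1) := by
      simp
    rw [h] at hr
    simp only [mem_pathSet, hij, false_and, true_and, false_or] at hr
    omega

theorem pathSet_injOn (hij : i ≠ j) : Set.InjOn (pathSet k i j) (Set.Iic (2 * k + 2)) := by
  intro p hp q hq h
  by_contra hne
  rcases lt_or_gt_of_ne hne with hlt | hlt
  · exact pathSet_ne_of_lt hij hlt hq h
  · exact pathSet_ne_of_lt hij hlt hp h.symm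

theorem fst_mem_of_mem_pathSet {p : ℕ} {x : Fin t × Fin (k + 1)} (hx : x ∈ pathSet k i j p) :
    x.1 = i ∨ x.1 = j := by
  rw [mem_pathSet] at hx
  tauto

theorem mk_zero_mem_pathSet {p : ℕ} (hp : 0 < p) : (j, 0) ∈ pathSet k i j p := by
  simp [hp]

theorem mk_last_mem_pathSet {p : ℕ} (hp : p < 2 * k + 2) :
    (i, Fin.last k) ∈ pathSet k i j p := by
  simp [hp]

theorem pathSet_ne_block (hij : i ≠ j) {p : ℕ} (hp₀ : 0 < p) (hp : p < 2 * k + 2)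
    (m : Fin t) :
    pathSet k i j p ≠ block k m := by
  intro h
  have hj := mk_zero_mem_pathSet (i := i) (j := j) (k := k) hp₀
  have hi := mk_last_mem_pathSet (i := i) (j := j) hp
  rw [h, mem_block] at hi hj
  exact hij (hi.trans hj.symm)

theorem eq_of_pathSet_eq {i' j' : Fin t} (hij : i < j) (hij' : i' < j') {p q : ℕ}
    (hp₀ : 0 < p) (hp : p < 2 * k + 2) (hq₀ : 0 < q) (hq : q < 2 * k + 2)
    (h : pathSet k i j p = pathSet k i' j' q) : i = i' ∧ j = j' := by
  have hj := fst_mem_of_mem_pathSet (h ▸ mk_zero_mem_pathSet (i := i) hp₀)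
  have hi := fst_mem_of_mem_pathSet (h ▸ mk_last_mem_pathSet (j := j) hp)
  have hj' := fst_mem_of_mem_pathSet (h.symm ▸ mk_zero_mem_pathSet (i := i') hq₀)
  have hi' := fst_mem_of_mem_pathSet (h.symm ▸ mk_last_mem_pathSet (j := j') hq)
  simp only [Fin.ext_iff, Fin.lt_def] at *
  omega

theorem block_injective : Function.Injective (block (t := t) k) := by
  intro i i' h
  have : (i, (0 : Fin (k + 1))) ∈ block k i' := h ▸ mem_block.2 rfl
  exact mem_block.1 this

variable (k) in
def layerMap : Fin t ⊕ ({e : Fin t × Fin t // e.1 < e.2} × Fin (2 * k + 1)) →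
    Finset (Fin t × Fin (k + 1))
  | .inl i => block k i
  | .inr (e, l) => pathSet k e.1.1 e.1.2 (l + 1)

theorem layerMap_injective : Function.Injective (layerMap (t := t) k) := by
  rintro (i | ⟨e, l⟩) (i' | ⟨e', l'⟩) h <;> simp only [layerMap] at h
  · rw [block_injective h]
  · exact absurd h.symm (pathSet_ne_block e'.2.ne (by omega) (by omega) i)
  · exact absurd h (pathSet_ne_block e.2.ne (by omega) (by omega) i')
  · obtain ⟨hi, hj⟩ := eq_of_pathSet_eq e.2 e'.2 (by omega) (by omega) (by omega) (by omega) h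
    obtain rfl : e = e' := Subtype.ext (Prod.ext hi hj)
    have hl := pathSet_injOn e.2.ne (Set.mem_Iic.2 (by omega)) (Set.mem_Iic.2 (by omega)) h
    rw [Fin.ext (by omega : l.val = l'.val)]

theorem hasse_adj_block_pathSet {u : Fin t} {e : {e : Fin t × Fin t // e.1 < e.2}}
    {l : Fin (2 * k + 1)} (h : (subdividedComplete t (2 * k + 1)).Adj (.inl u) (.inr (e, l))) :
    (hasse _).Adj (block k u) (pathSet k e.1.1 e.1.2 (l + 1)) := by
  simp only [subdividedComplete, fromRel_adj, or_false] at h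
  obtain ⟨-, ⟨rfl, hl⟩ | ⟨rfl, hl⟩⟩ := h
  · rw [← pathSet_zero _ e.1.2, hl]
    exact hasse_adj_pathSet_succ e.2.ne (by omega)
  · rw [← pathSet_two_mul_add_two e.1.1, hl]
    exact (hasse_adj_pathSet_succ e.2.ne (p := 2 * k + 1) (by omega)).symm

theorem hasse_adj_layerMap {u v} (h : (subdividedComplete t (2 * k + 1)).Adj u v) :
    (hasse _).Adj (layerMap k u) (layerMap k v) := by
  rcases u with u | ⟨e, l⟩ <;> rcases v with v | ⟨e', l'⟩
  · simp [subdividedComplete] at h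
  · exact hasse_adj_block_pathSet h
  · exact (hasse_adj_block_pathSet h.symm).symm
  · simp only [subdividedComplete, fromRel_adj] at h
    obtain ⟨-, ⟨rfl, hl⟩ | ⟨rfl, hl⟩⟩ := h
    · simp only [layerMap, ← hl]
      exact hasse_adj_pathSet_succ e.2.ne (by omega)
    · simp only [layerMap, ← hl]
      exact (hasse_adj_pathSet_succ e'.2.ne (by omega)).symm

end SubdividedComplete

open SubdividedComplete in
theorem odd_subdivision_complete_layered_general (k t : ℕ) :
    IsLayered (subdividedComplete t (2 * k + 1)) := by
  refine isLayered_of_hom ⟨layerMap k, hasse_adj_layerMap⟩ layerMap_injective (k + 2) ?_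
  rintro (i | ⟨e, l⟩)
  · simp [layerMap, card_block]
  · have hl : l.val + 1 ≤ 2 * k + 2 := by omega
    simp only [RelHom.coeFn_mk, layerMap, card_pathSet e.2.ne hl]
    omega

/-- For every integer `k ≥ 0` and positive integer `t`, the odd subdivision
`T_{2k+1}(K_t)` is layered. -/
theorem odd_subdivision_complete_layered (k t : ℕ) (ht : 1 ≤ t) :
    IsLayered (subdividedComplete t (2 * k + 1)) :=
  odd_subdivision_complete_layered_general k t
end
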